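/- Fix β ∈ ℤ. Suppose (P_F)_{F ∈ For} and (Q_F)_{F ∈ For} are families of polynomials in R such that P_∅ = Q_∅ = 1, ct P_F = ct Q_F = 0 for all F ≠ ∅, and for every indexed forest F and every i ≥ 1: π̃_i P_F = P_{F/i} and π̃_i Q_F = Q_{F/i} if i ∈ QDes(F), while π̃_i P_F = −β · R_i P_F and π̃_i Q_F = −β · R_i Q_F if i ∉ QDes(F). Then P_F = Q_F for all F ∈ For. -/

import Mathlib

open MvPolynomial

/-- The ambient ring `R = ℤ[x₁, x₂, …]`, with variables indexed by positive integers. -/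
abbrev MyR : Type := MvPolynomial ℕ+ ℤ

/-- The Bergeron–Sottile operator `R_i`: the `ℤ`-algebra map with
`x_j ↦ x_j` for `j < i`, `x_i ↦ 0`, and `x_j ↦ x_{j-1}` for `j > i`. -/
noncomputable def BS (i : ℕ+) : MyR →ₐ[ℤ] MyR :=
  aeval fun j : ℕ+ =>
    if j < i then (X j : MyR) else if j = i then 0 else X (j - 1)

/-- Plane binary trees. -/
inductive BTree : Type
  | leaf : BTree
  | node : BTree → BTree → BTree
  deriving DecidableEq

namespace BTree

def numLeaves : BTree → ℕ+
  | leaf => 1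
  | node l r => l.numLeaves + r.numLeaves

/-- Number of internal nodes. -/
def size : BTree → ℕ
  | leaf => 0
  | node l r => l.size + r.size + 1

/-- `qdesSet T a` : the QDes positions contributed by a tree `T` whose leftmost
leaf carries the label `a` (leaves are labeled consecutively left-to-right). -/
def qdesSet : BTree → ℕ+ → Set ℕ+
  | leaf, _ => ∅
  | node leaf leaf, a => {a}
  | node l r, a => l.qdesSet a ∪ r.qdesSet (a + l.numLeaves)

/-- `trim T a i` : replace the terminal node whose leaf-children are labeled
`i`, `i+1` by a single leaf (`a` = label of the leftmost leaf of `T`). -/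
def trim : BTree → ℕ+ → ℕ+ → BTree
  | leaf, _, _ => leaf
  | node l r, a, i =>
    if l = leaf ∧ r = leaf ∧ a = i then leaf
    else node (l.trim a i) (r.trim (a + l.numLeaves) i)

/-- `rightAt T a i = true` iff the terminal node of `T` whose leaf-children are
labeled `i`, `i+1` is the right child of its parent. -/
def rightAt : BTree → ℕ+ → ℕ+ → Bool
  | leaf, _, _ => false
  | node l r, a, i =>
    l.rightAt a i || r.rightAt (a + l.numLeaves) i ||
      (decide (r = node leaf leaf) && decide (a + l.numLeaves = i))

end BTree

/-- An indexed forest: a sequence of plane binary trees, all but finitely many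
of which are the single leaf. -/
structure IndexedForest : Type where
  trees : ℕ → BTree
  finite : {n : ℕ | trees n ≠ BTree.leaf}.Finite

namespace IndexedForest

noncomputable def supp (F : IndexedForest) : Finset ℕ := F.finite.toFinset

/-- `|F|`, the number of internal nodes of `F`. -/
noncomputable def size (F : IndexedForest) : ℕ := ∑ n ∈ F.supp, (F.trees n).size

/-- The label of the leftmost leaf of the `n`-th tree (trees indexed from `0`;
leaves are labeled `1, 2, 3, …` from left to right across the trees). -/
def firstLeaf (F : IndexedForest) (n : ℕ) : ℕ+ :=
  ⟨1 + ∑ m ∈ Finset.range n, ((F.trees m).numLeaves : ℕ), by omega⟩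

/-- `QDes(F)`. -/
def qdes (F : IndexedForest) : Set ℕ+ :=
  ⋃ n : ℕ, (F.trees n).qdesSet (F.firstLeaf n)

/-- `F/i`, the forest obtained by replacing the terminal node with leaf-children
`i`, `i+1` by a single leaf. -/
def trim (F : IndexedForest) (i : ℕ+) : IndexedForest where
  trees := fun n => (F.trees n).trim (F.firstLeaf n) i
  finite := F.finite.subset (fun n hn => by
    simp only [Set.mem_setOf_eq] at hn ⊢
    intro h
    apply hn
    rw [h]
    rfl)

/-- The empty forest `∅`. -/
protected def empty : IndexedForest :=
  ⟨fun _ => BTree.leaf, Set.finite_empty.subset (fun _ hn => (hn rfl).elim)⟩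

/-- The terminal node of `F` at `i ∈ QDes F` is a right child. -/
def rightAt (F : IndexedForest) (i : ℕ+) : Prop :=
  ∃ n : ℕ, (F.trees n).rightAt (F.firstLeaf n) i = true

open Classical in
/-- `min QDes(F)` (defaulting to `1` if `QDes(F)` is empty, i.e. `F = ∅`). -/
noncomputable def minQDes (F : IndexedForest) : ℕ+ :=
  if h : ((fun i : ℕ+ => (i : ℕ)) '' F.qdes).Nonempty then
    ⟨sInf ((fun i : ℕ+ => (i : ℕ)) '' F.qdes), by
      obtain ⟨i, _, hieq⟩ := Nat.sInf_mem h
      exact hieq ▸ i.2⟩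
  else 1

end IndexedForest

/-- Set-valued labeled plane binary trees: each internal node carries a finite
set of positive integers. -/
inductive LTree : Type
  | leaf : LTree
  | node : Finset ℕ+ → LTree → LTree → LTree

namespace LTree

/-- Underlying unlabeled tree. -/
def shape : LTree → BTree
  | leaf => BTree.leaf
  | node _ l r => BTree.node l.shape r.shape

/-- The label set of the top of a subtree; a leaf with label `a` counts as the
singleton `{a}`. -/
def headSet : LTree → ℕ+ → Finset ℕ+
  | leaf, a => {a}
  | node S _ _, _ => S

/-- Compatibility of a set-valued labeling: every label set is nonempty,
`max κ(v) ≤ min κ(v_L)` and `max κ(v) < min κ(v_R)`.  The parameter `a` is the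
label of the leftmost leaf of the subtree. -/
def Compatible : LTree → ℕ+ → Prop
  | leaf, _ => True
  | node S l r, a =>
    S.Nonempty ∧ l.Compatible a ∧ r.Compatible (a + l.shape.numLeaves) ∧
    (∀ s ∈ S, ∀ t ∈ l.headSet a, s ≤ t) ∧
    (∀ s ∈ S, ∀ t ∈ r.headSet (a + l.shape.numLeaves), s < t)

/-- The monomial `x_κ` contributed by a labeled tree. -/
noncomputable def weight : LTree → MyR
  | leaf => 1
  | node S l r => (∏ j ∈ S, (X j : MyR)) * l.weight * r.weight

/-- `|κ|`, the total cardinality of the label sets. -/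
def lsize : LTree → ℕ
  | leaf => 0
  | node S l r => S.card + l.lsize + r.lsize

/-- All label sets are singletons. -/
def allSingle : LTree → Prop
  | leaf => True
  | node S l r => S.card = 1 ∧ l.allSingle ∧ r.allSingle

end LTree

/-- The type of compatible set-valued labelings of the indexed forest `F`. -/
def IndexedForest.Labelings (F : IndexedForest) : Type :=
  {κ : ℕ → LTree //
    (∀ n, (κ n).shape = F.trees n) ∧ ∀ n, (κ n).Compatible (F.firstLeaf n)}

/-- The grove polynomial `G_F^{(β)} = Σ_κ β^{|κ|-|F|} x_κ`. -/
noncomputable def groveP (β : ℤ) (F : IndexedForest) : MyR :=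
  ∑ᶠ κ : F.Labelings,
    C (β ^ ((∑ n ∈ F.supp, (κ.1 n).lsize) - F.size)) * ∏ n ∈ F.supp, (κ.1 n).weight

/-- The forest polynomial `𝔓_F`: the sum of `x_κ` over compatible set-valued
labelings all of whose label sets are singletons. -/
noncomputable def forestPoly (F : IndexedForest) : MyR :=
  ∑ᶠ κ : {κ : F.Labelings // ∀ n, (κ.1 n).allSingle},
    ∏ n ∈ F.supp, (κ.1.1 n).weight

open Classical in
/-- Fuel-indexed recursion implementing the grove extractor. -/
noncomputable def extractAux (T : ℕ+ → MyR → MyR) (β : ℤ) :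
    ℕ → IndexedForest → MyR → MyR
  | 0, _, f => f
  | k + 1, F, f =>
    if F = IndexedForest.empty then f
    else
      extractAux T β k (F.trim F.minQDes)
        (if F.rightAt F.minQDes then (1 + C β * X F.minQDes) * T F.minQDes f
         else T F.minQDes f)

/-- The grove extractor `Ĥ_F`: `Ĥ_∅ = id`, and for `F ≠ ∅` and `i = min QDes F`,
`Ĥ_F = Ĥ_{F/i} ∘ Ĥ^R_i` if the terminal node at `i` is a right child and
`Ĥ_F = Ĥ_{F/i} ∘ Ĥ^L_i` otherwise, where `Ĥ^L_i = T_i` and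
`Ĥ^R_i = (1 + βx_i)·T_i`.  (The recursion is implemented with fuel `|F|`, using
that `|F/i| = |F| - 1`.) -/
noncomputable def extract (T : ℕ+ → MyR → MyR) (β : ℤ) (F : IndexedForest) :
    MyR → MyR :=
  extractAux T β F.size F

/-- `S_∞`: permutations of `{1, 2, …}` fixing all but finitely many points. -/
def SPerm : Type := {w : Equiv.Perm ℕ+ // {x : ℕ+ | w x ≠ x}.Finite}

namespace SPerm

/-- The identity permutation. -/
protected def one : SPerm :=
  ⟨1, Set.finite_empty.subset (fun _ hx => (hx rfl).elim)⟩

/-- `w * s_i` where `s_i` is the transposition of `i` and `i+1`. -/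
noncomputable def mulSwap (w : SPerm) (i : ℕ+) : SPerm :=
  ⟨w.1 * Equiv.swap i (i + 1), by
    apply ((w.2.union (Set.finite_singleton i)).union
      (Set.finite_singleton (i + 1))).subset
    intro x hx
    simp only [Set.mem_setOf_eq, Equiv.Perm.mul_apply] at hx
    simp only [Set.mem_union, Set.mem_setOf_eq, Set.mem_singleton_iff]
    by_cases h1 : x = i
    · exact Or.inl (Or.inr h1)
    by_cases h2 : x = i + 1
    · exact Or.inr h2
    · exact Or.inl (Or.inl (by rwa [Equiv.swap_apply_of_ne_of_ne h1 h2] at hx))⟩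

/-- `ℓ(w)`, the number of inversions. -/
noncomputable def len (w : SPerm) : ℕ :=
  Set.ncard {p : ℕ+ × ℕ+ | p.1 < p.2 ∧ w.1 p.2 < w.1 p.1}

/-- `Des(w) = {i ≥ 1 : w(i) > w(i+1)}`. -/
def des (w : SPerm) : Set ℕ+ := {i : ℕ+ | w.1 (i + 1) < w.1 i}

end SPerm

/-- `f` is quasisymmetric in `x₁, …, xₙ`: no variable `x_j` with `j > n`
occurs, and coefficients of monomials with the same exponent word on strictly
increasing variable sequences in `{1, …, n}` agree. -/
def IsQuasisym (n : ℕ+) (f : MyR) : Prop :=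
  (∀ j : ℕ+, n < j → ∀ m ∈ f.support, m j = 0) ∧
  ∀ k : ℕ, 0 < k → ∀ a : Fin k → ℕ+, ∀ u v : Fin k → ℕ+,
    StrictMono u → StrictMono v → (∀ m, u m ≤ n) → (∀ m, v m ≤ n) →
    coeff (∑ m, Finsupp.single (u m) ((a m : ℕ))) f =
      coeff (∑ m, Finsupp.single (v m) ((a m : ℕ))) f

/-- The zigzag (chain) tree encoded by a list of booleans: the internal nodes
form a chain `v₁, …, v_k` (`k` = length + 1) and the `m`-th entry records
whether `v_{m+1}` is the right child of `v_m`. -/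
def chainTree : List Bool → BTree
  | [] => BTree.node BTree.leaf BTree.leaf
  | b :: rest =>
    if b then BTree.node BTree.leaf (chainTree rest)
    else BTree.node (chainTree rest) BTree.leaf

/-!
Put `D = P_F - Q_F` and argue by induction on `|F|`. Multiplying the defining relation of
`T_i` by `x_i` turns the hypotheses into `R_{i+1} D = (1 + β x_i) R_i D` when `i ∈ QDes F` (the
induction hypothesis makes `P_{F/i} = Q_{F/i}`) and `R_{i+1} D = R_i D` otherwise. So `R_1 D`
divides every `R_i D`, and `R_i D = D` for `i` beyond the variables of `D`, whence `R_1 D ∣ D`.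
Applying `R_1` repeatedly, `R_1^k D ∣ D` for all `k`; but `R_1^k` kills `x_1, …, x_k`, so for
large `k` it sends `D` to its constant term, which is `0`.
-/

theorem iterate_map_dvd_self {M F : Type*} [Monoid M] [FunLike F M M] [MulHomClass F M M]
    (φ : F) {x : M} (h : φ x ∣ x) (m : ℕ) : φ^[m] x ∣ x := by
  induction m with
  | zero => exact dvd_rfl
  | succ m ih =>
    rw [Function.iterate_succ_apply']
    exact (map_dvd φ ih).trans h

theorem BS_X (i j : ℕ+) :
    BS i (X j) = if j < i then (X j : MyR) else if j = i then 0 else X (j - 1) := by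
  simp [BS]

theorem BS_X_of_lt {i j : ℕ+} (h : j < i) : BS i (X j) = X j := by
  simp [BS_X, h]

theorem BS_X_self (i : ℕ+) : BS i (X i) = 0 := by
  simp [BS_X]

theorem BS_X_succ_of_le {i j : ℕ+} (h : i ≤ j) : BS i (X (j + 1)) = X j := by
  have hlt : i < j + 1 := h.trans_lt (PNat.lt_add_right j 1)
  simp [BS_X, hlt.not_gt, hlt.ne']

theorem BS_eventually_eq_self (f : MyR) : ∃ N : ℕ+, ∀ i, N ≤ i → BS i f = f := by
  induction f using MvPolynomial.induction_on with
  | C a => exact ⟨1, fun i _ => by rw [algHom_C, algebraMap_eq]⟩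
  | add p q hp hq =>
    obtain ⟨Np, hNp⟩ := hp
    obtain ⟨Nq, hNq⟩ := hq
    exact ⟨max Np Nq, fun i hi => by
      rw [map_add, hNp i (le_of_max_le_left hi), hNq i (le_of_max_le_right hi)]⟩
  | mul_X p j hp =>
    obtain ⟨Np, hNp⟩ := hp
    exact ⟨max Np (j + 1), fun i hi => by
      rw [map_mul, hNp i (le_of_max_le_left hi),
        BS_X_of_lt ((PNat.lt_add_right j 1).trans_le (le_of_max_le_right hi))]⟩

theorem BS_one_pow_X {k : ℕ} {j : ℕ+} (h : (j : ℕ) ≤ k) : (BS 1 ^ k) (X j) = 0 := by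
  induction k generalizing j with
  | zero => exact absurd h (Nat.not_le.mpr j.pos)
  | succ k ih =>
    rw [pow_succ, AlgHom.mul_apply]
    rcases eq_or_ne j 1 with rfl | hj
    · rw [BS_X_self, map_zero]
    · obtain ⟨j, rfl⟩ := PNat.exists_eq_succ_of_ne_one hj
      rw [BS_X_succ_of_le one_le, ih (by simpa using h)]

theorem BS_one_pow_eventually_eq_C (f : MyR) :
    ∃ k₀ : ℕ, ∀ k, k₀ ≤ k → (BS 1 ^ k) f = C (constantCoeff f) := by
  induction f using MvPolynomial.induction_on with
  | C a => exact ⟨0, fun k _ => by rw [algHom_C, algebraMap_eq, constantCoeff_C]⟩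
  | add p q hp hq =>
    obtain ⟨kp, hkp⟩ := hp
    obtain ⟨kq, hkq⟩ := hq
    exact ⟨max kp kq, fun k hk => by
      rw [map_add, hkp k (le_of_max_le_left hk), hkq k (le_of_max_le_right hk), map_add,
        map_add]⟩
  | mul_X p j _ =>
    exact ⟨j, fun k hk => by
      rw [map_mul, BS_one_pow_X hk, mul_zero, map_mul, constantCoeff_X, mul_zero, map_zero]⟩

theorem eq_zero_of_BS_dvd_BS_succ {f : MyR} (hct : constantCoeff f = 0)
    (hdvd : ∀ i, BS i f ∣ BS (i + 1) f) : f = 0 := by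
  have h_one_dvd : ∀ i, BS 1 f ∣ BS i f := fun i =>
    PNat.recOn i dvd_rfl fun i ih => ih.trans (hdvd i)
  obtain ⟨N, hN⟩ := BS_eventually_eq_self f
  have h_self : BS 1 f ∣ f := by simpa only [hN N le_rfl] using h_one_dvd N
  obtain ⟨k, hk⟩ := BS_one_pow_eventually_eq_C f
  have h := iterate_map_dvd_self (BS 1) h_self k
  rwa [← AlgHom.coe_pow, hk k le_rfl, hct, map_zero, zero_dvd_iff] at h

namespace BTree

theorem size_trim_le (t : BTree) (a i : ℕ+) : (t.trim a i).size ≤ t.size := by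
  induction t generalizing a with
  | leaf => exact le_rfl
  | node l r ihl ihr =>
    rw [trim]
    split_ifs
    · exact Nat.zero_le _
    · simpa only [size] using Nat.add_le_add_right (Nat.add_le_add (ihl a) (ihr _)) 1

theorem size_trim_lt {t : BTree} {a i : ℕ+} (h : i ∈ t.qdesSet a) :
    (t.trim a i).size < t.size := by
  fun_induction qdesSet t a with
  | case1 => exact absurd h (Set.notMem_empty i)
  | case2 a =>
    obtain rfl : i = a := h
    simp [trim, size]
  | case3 l r a hlr ihl ihr =>
    have hlr' : ¬ (l = leaf ∧ r = leaf) := fun ⟨hl, hr⟩ => hlr hl hr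
    rw [trim, if_neg (fun h => hlr' ⟨h.1, h.2.1⟩)]
    simp only [size]
    rcases h with h | h
    · have := ihl h; have := size_trim_le r (a + l.numLeaves) i; omega
    · have := ihr h; have := size_trim_le l a i; omega

end BTree

namespace IndexedForest

theorem size_eq_sum_of_supp_subset (F : IndexedForest) {s : Finset ℕ} (hs : F.supp ⊆ s) :
    F.size = ∑ n ∈ s, (F.trees n).size := by
  refine Finset.sum_subset hs fun n _ hn => ?_
  rw [supp, Set.Finite.mem_toFinset, Set.mem_ofPred_eq, not_not] at hn
  rw [hn]
  rfl

theorem size_trim_lt {F : IndexedForest} {i : ℕ+} (h : i ∈ F.qdes) :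
    (F.trim i).size < F.size := by
  obtain ⟨n, hn⟩ := Set.mem_iUnion.mp h
  have hn_supp : n ∈ F.supp := by
    rw [supp, Set.Finite.mem_toFinset]
    intro hleaf
    rw [hleaf] at hn
    exact hn
  have h_supp : (F.trim i).supp ⊆ F.supp := by
    intro m hm
    rw [supp, Set.Finite.mem_toFinset] at hm ⊢
    intro hleaf
    exact hm (by simp only [trim, hleaf]; rfl)
  rw [size_eq_sum_of_supp_subset _ h_supp, size]
  exact Finset.sum_lt_sum (fun m _ => BTree.size_trim_le _ _ _)
    ⟨n, hn_supp, BTree.size_trim_lt hn⟩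

end IndexedForest

section DividedDifference

variable {T : ℕ+ → MyR → MyR}

theorem X_mul_T_shift
    (hT : ∀ (i : ℕ+) (f : MyR), X i * T i f = BS (i + 1) f - BS i f) (β : ℤ) (i : ℕ+) (f : MyR) :
    X i * T i ((1 + C β * X (i + 1)) * f) = BS (i + 1) f - (1 + C β * X i) * BS i f := by
  simp only [hT, map_mul, map_add, map_one, algHom_C, algebraMap_eq, BS_X_self,
    BS_X_succ_of_le le_rfl]
  ring

theorem BS_succ_eq_of_T_shift_eq
    (hT : ∀ (i : ℕ+) (f : MyR), X i * T i f = BS (i + 1) f - BS i f) {β : ℤ} {i : ℕ+} {f : MyR}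
    (h : T i ((1 + C β * X (i + 1)) * f) = -(C β) * BS i f) : BS (i + 1) f = BS i f := by
  have hf := X_mul_T_shift hT β i f
  rw [h] at hf
  linear_combination -hf

theorem BS_succ_sub_eq_of_T_shift_eq
    (hT : ∀ (i : ℕ+) (f : MyR), X i * T i f = BS (i + 1) f - BS i f) {β : ℤ} {i : ℕ+} {f g : MyR}
    (h : T i ((1 + C β * X (i + 1)) * f) = T i ((1 + C β * X (i + 1)) * g)) :
    BS (i + 1) (f - g) = (1 + C β * X i) * BS i (f - g) := by
  have hf := X_mul_T_shift hT β i f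
  have hg := X_mul_T_shift hT β i g
  rw [h] at hf
  rw [map_sub, map_sub]
  linear_combination hg - hf

end DividedDifference

/-- uniqueness of a family satisfying the defining relations of
the grove polynomials. -/
theorem stmt4 (β : ℤ) (T : ℕ+ → MyR → MyR)
    (hT : ∀ (i : ℕ+) (f : MyR), (X i : MyR) * T i f = BS (i + 1) f - BS i f)
    (P Q : IndexedForest → MyR)
    (hP1 : P IndexedForest.empty = 1) (hQ1 : Q IndexedForest.empty = 1)
    (hP0 : ∀ F : IndexedForest, F ≠ IndexedForest.empty →
      constantCoeff (P F) = 0)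
    (hQ0 : ∀ F : IndexedForest, F ≠ IndexedForest.empty →
      constantCoeff (Q F) = 0)
    (hPin : ∀ (F : IndexedForest) (i : ℕ+), i ∈ F.qdes →
      T i ((1 + C β * X (i + 1)) * P F) = P (F.trim i))
    (hPout : ∀ (F : IndexedForest) (i : ℕ+), i ∉ F.qdes →
      T i ((1 + C β * X (i + 1)) * P F) = -(C β) * BS i (P F))
    (hQin : ∀ (F : IndexedForest) (i : ℕ+), i ∈ F.qdes →
      T i ((1 + C β * X (i + 1)) * Q F) = Q (F.trim i))
    (hQout : ∀ (F : IndexedForest) (i : ℕ+), i ∉ F.qdes →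
      T i ((1 + C β * X (i + 1)) * Q F) = -(C β) * BS i (Q F)) :
    ∀ F : IndexedForest, P F = Q F := by
  intro F
  induction hF : F.size using Nat.strong_induction_on generalizing F with
  | _ n ih =>
  by_cases he : F = IndexedForest.empty
  · rw [he, hP1, hQ1]
  have hct : constantCoeff (P F - Q F) = 0 := by rw [map_sub, hP0 F he, hQ0 F he, sub_zero]
  refine sub_eq_zero.mp (eq_zero_of_BS_dvd_BS_succ hct fun i => ?_)
  by_cases hi : i ∈ F.qdes
  · have h_trim : P (F.trim i) = Q (F.trim i) := ih _ (hF ▸ F.size_trim_lt hi) _ rfl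
    exact Dvd.intro_left _ (BS_succ_sub_eq_of_T_shift_eq hT
      (by rw [hPin F i hi, hQin F i hi, h_trim])).symm
  · rw [map_sub, map_sub, BS_succ_eq_of_T_shift_eq hT (hPout F i hi),
      BS_succ_eq_of_T_shift_eq hT (hQout F i hi)]
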